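/- arXiv:2110.13970 — 2 statements merged into one kernel-verified Lean document; each statement's English description precedes it below -/
import Mathlib

section
/- Let $N \ge 1$, let $d_1,\dots,d_N, R$ be positive integers, and let $\mathcal{X} \in \mathbb{R}^{d_1 \times \cdots \times d_N}$ be a fixed tensor. Let $\mathcal{G}^1 \in \mathbb{R}^{1 \times d_1 \times R}$, $\mathcal{G}^n \in \mathbb{R}^{R \times d_n \times R}$ for $1 < n < N$, and $\mathcal{G}^N \in \mathbb{R}^{R \times d_N \times 1}$ be random core tensors whose entries are all i.i.d. Rademacher random variables, and let $\mathcal{T} = [\![\mathcal{G}^1, \dots, \mathcal{G}^N]\!]$ be the corresponding tensor train tensor. Then $\mathbb{E}\,\langle \mathcal{T}, \mathcal{X} \rangle^2 = R^{N-1}\,\|\mathcal{X}\|_F^2$. -/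
/-!
Expanding the square turns `𝔼⟨𝒯, 𝒳⟩²` into a double sum, over pairs of multi-indices `i` and
bond paths `r`, of `X i * X i'` times the expectation of the product of the core entries met along
both paths. A path meets each core exactly once, so these are products of distinct i.i.d.
Rademacher variables, which are orthonormal: the expectation is `1` when both paths meet the same
entries and `0` otherwise. As `ρ 0 = 1`, the entries met determine `(i, r)`, so only the diagonal
survives, and each `X i ^ 2` is counted once per bond path, of which there are `R ^ (N - 1)`.
-/

open MeasureTheory ProbabilityTheory Matrix Finset

noncomputable section

/-- The Rademacher distribution on `ℝ`: uniform on `{1, -1}`. -/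
def radDist : Measure ℝ :=
  (2⁻¹ : ENNReal) • Measure.dirac (1 : ℝ) + (2⁻¹ : ENNReal) • Measure.dirac (-1 : ℝ)

/-- Path-sum contraction of tensor-train cores `G` at multi-index `i`, with the
two boundary bond indices fixed to `a` and `b`. -/
def ttPath {N : ℕ} (d : Fin N → ℕ) (ρ : Fin (N + 1) → ℕ)
    (G : (n : Fin N) → Fin (ρ n.castSucc) → Fin (d n) → Fin (ρ n.succ) → ℝ)
    (i : (n : Fin N) → Fin (d n)) (a : Fin (ρ 0)) (b : Fin (ρ (Fin.last N))) : ℝ :=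
  ∑ r : ((n : Fin (N + 1)) → Fin (ρ n)),
    if r 0 = a ∧ r (Fin.last N) = b then
      ∏ n : Fin N, G n (r n.castSucc) (i n) (r n.succ)
    else 0

theorem integral_pow_radDist (k : ℕ) : ∫ x, x ^ k ∂radDist = if Even k then 1 else 0 := by
  have hint (a : ℝ) : Integrable (fun x : ℝ => x ^ k) (Measure.dirac a) :=
    integrable_dirac (by simp)
  rw [radDist, integral_add_measure ((hint 1).smul_measure (by simp))
    ((hint (-1)).smul_measure (by simp)), integral_smul_measure, integral_smul_measure,
    integral_dirac, integral_dirac]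
  rcases Nat.even_or_odd k with hk | hk
  · simp [hk, hk.neg_one_pow]
    norm_num
  · simp [hk.neg_one_pow, Nat.not_even_iff_odd.mpr hk]

theorem ae_abs_eq_one_radDist : ∀ᵐ x ∂radDist, |x| = 1 := by
  simp [radDist, ae_add_measure_iff]

theorem prod_mul_prod_eq_prod_pow {ι M : Type*} [Fintype ι] [DecidableEq ι] [CommMonoid M]
    (f : ι → M) (s t : Finset ι) :
    (∏ p ∈ s, f p) * ∏ p ∈ t, f p
      = ∏ p, f p ^ ((if p ∈ s then 1 else 0) + (if p ∈ t then 1 else 0)) := by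
  simp only [pow_add, prod_mul_distrib, pow_ite, pow_one, pow_zero, prod_ite_mem_eq]

section RademacherFamily

variable {ι Ω : Type*} [Fintype ι] [MeasurableSpace Ω] {μ : Measure Ω} {F : ι → Ω → ℝ}

theorem integrable_prod_pow_of_map_eq_radDist [IsFiniteMeasure μ]
    (hF : ∀ p, Measurable (F p)) (hlaw : ∀ p, μ.map (F p) = radDist) (m : ι → ℕ) :
    Integrable (fun ω => ∏ p, F p ω ^ m p) μ := by
  have habs : ∀ᵐ ω ∂μ, ∀ p, |F p ω| = 1 := ae_all_iff.mpr fun p =>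
    ae_of_ae_map (hF p).aemeasurable ((hlaw p).symm ▸ ae_abs_eq_one_radDist)
  refine Integrable.of_bound (by fun_prop) 1 ?_
  filter_upwards [habs] with ω hω
  simp [hω]

theorem integral_prod_pow_of_iIndepFun (hF : ∀ p, Measurable (F p))
    (hlaw : ∀ p, μ.map (F p) = radDist) (hindep : iIndepFun F μ) (m : ι → ℕ) :
    ∫ ω, ∏ p, F p ω ^ m p ∂μ = if ∀ p, Even (m p) then 1 else 0 := by
  have hmoment (p : ι) : ∫ ω, F p ω ^ m p ∂μ = if Even (m p) then 1 else 0 := by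
    rw [← integral_pow_radDist, ← hlaw p, integral_map (hF p).aemeasurable (by fun_prop)]
  rw [hindep.integral_fun_prod_comp (f := fun p x => x ^ m p) (fun p => (hF p).aemeasurable)
    (fun p => by fun_prop)]
  simp only [hmoment, prod_ite_zero, prod_const_one, mem_univ, true_implies]

theorem integral_prod_mul_prod_of_iIndepFun [DecidableEq ι] (hF : ∀ p, Measurable (F p))
    (hlaw : ∀ p, μ.map (F p) = radDist) (hindep : iIndepFun F μ) (s t : Finset ι) :
    ∫ ω, (∏ p ∈ s, F p ω) * ∏ p ∈ t, F p ω ∂μ = if s = t then 1 else 0 := by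
  have hparity :
      (∀ p, Even ((if p ∈ s then 1 else 0) + (if p ∈ t then 1 else 0))) ↔ s = t := by
    rw [Finset.ext_iff]
    refine forall_congr' fun p => ?_
    by_cases hs : p ∈ s <;> by_cases ht : p ∈ t <;> simp [hs, ht]
  simp only [prod_mul_prod_eq_prod_pow]
  rw [integral_prod_pow_of_iIndepFun hF hlaw hindep, if_congr hparity rfl rfl]

end RademacherFamily

theorem integral_sq_sum_mul_of_orthonormal {κ Ω : Type*} [Fintype κ] [DecidableEq κ]
    [MeasurableSpace Ω] {μ : Measure Ω} (W : κ → Ω → ℝ)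
    (hint : ∀ q q', Integrable (fun ω => W q ω * W q' ω) μ)
    (horth : ∀ q q', ∫ ω, W q ω * W q' ω ∂μ = if q = q' then 1 else 0) (c : κ → ℝ) :
    ∫ ω, (∑ q, c q * W q ω) ^ 2 ∂μ = ∑ q, c q ^ 2 := by
  have hexpand (ω : Ω) : (∑ q, c q * W q ω) ^ 2
      = ∑ q, ∑ q', c q * c q' * (W q ω * W q' ω) := by
    rw [sq, sum_mul_sum]
    exact sum_congr rfl fun q _ => sum_congr rfl fun q' _ => by ring
  simp_rw [hexpand]
  rw [integral_finsetSum _ fun q _ => integrable_finsetSum _ fun q' _ => (hint q q').const_mul _]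
  simp_rw [integral_finsetSum _ fun q' _ => (hint _ q').const_mul _, integral_const_mul, horth,
    mul_ite, mul_one, mul_zero, sum_ite_eq, mem_univ, if_true, sq]

section TensorTrain

variable {N : ℕ} {d : Fin N → ℕ} {ρ : Fin (N + 1) → ℕ}

variable (d ρ) in
/-- The core entries `G n (r n.castSucc) (i n) (r n.succ)` met along the bond path `r`. -/
def ttEdges (i : (n : Fin N) → Fin (d n)) (r : (n : Fin (N + 1)) → Fin (ρ n)) :
    Finset (Σ n : Fin N, Fin (ρ n.castSucc) × Fin (d n) × Fin (ρ n.succ)) :=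
  univ.map ⟨fun n => ⟨n, (r n.castSucc, i n, r n.succ)⟩, fun _ _ h => congrArg Sigma.fst h⟩

theorem prod_ttEdges
    (G : (n : Fin N) → Fin (ρ n.castSucc) → Fin (d n) → Fin (ρ n.succ) → ℝ)
    (i : (n : Fin N) → Fin (d n)) (r : (n : Fin (N + 1)) → Fin (ρ n)) :
    ∏ p ∈ ttEdges d ρ i r, G p.1 p.2.1 p.2.2.1 p.2.2.2
      = ∏ n, G n (r n.castSucc) (i n) (r n.succ) :=
  prod_map _ _ _

theorem sum_sum_ttPath
    (G : (n : Fin N) → Fin (ρ n.castSucc) → Fin (d n) → Fin (ρ n.succ) → ℝ)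
    (i : (n : Fin N) → Fin (d n)) :
    ∑ a, ∑ b, ttPath d ρ G i a b
      = ∑ r : (n : Fin (N + 1)) → Fin (ρ n), ∏ n, G n (r n.castSucc) (i n) (r n.succ) := by
  simp only [ttPath]
  rw [sum_congr rfl fun a _ => sum_comm, sum_comm]
  simp [ite_and]

theorem ttEdges_injective (hρ0 : ρ 0 = 1) :
    Function.Injective (Function.uncurry (ttEdges d ρ)) := by
  rintro ⟨i, r⟩ ⟨i', r'⟩ (h : ttEdges d ρ i r = ttEdges d ρ i' r')
  have hedge (n : Fin N) :
      r n.castSucc = r' n.castSucc ∧ i n = i' n ∧ r n.succ = r' n.succ := by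
    have hn : (⟨n, (r n.castSucc, i n, r n.succ)⟩ :
        Σ m : Fin N, Fin (ρ m.castSucc) × Fin (d m) × Fin (ρ m.succ)) ∈ ttEdges d ρ i' r' :=
      h ▸ mem_map_of_mem _ (mem_univ n)
    obtain ⟨m, -, hm⟩ := mem_map.mp hn
    obtain ⟨rfl, hm⟩ := Sigma.mk.inj hm
    simpa [eq_comm] using hm
  have : Subsingleton (Fin (ρ 0)) := by rw [hρ0]; infer_instance
  refine Prod.ext (funext fun n => (hedge n).2.1) (funext fun k => ?_)
  exact Fin.cases (Subsingleton.elim _ _) (fun n => (hedge n).2.2) k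

theorem card_ttPaths {R : ℕ} (hρ0 : ρ 0 = 1) (hρlast : ρ (Fin.last N) = 1)
    (hρmid : ∀ n : Fin (N + 1), n ≠ 0 → n ≠ Fin.last N → ρ n = R) :
    Fintype.card ((n : Fin (N + 1)) → Fin (ρ n)) = R ^ (N - 1) := by
  simp only [Fintype.card_pi, Fintype.card_fin]
  cases N with
  | zero => simpa using hρ0
  | succ k =>
    rw [Fin.prod_univ_castSucc, Fin.prod_univ_succ]
    simp only [Fin.castSucc_zero, hρ0, hρlast, one_mul, mul_one, Nat.add_sub_cancel]
    rw [prod_congr rfl fun j _ => hρmid _ (Fin.castSucc_ne_zero_iff.mpr (Fin.succ_ne_zero j))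
      (Fin.castSucc_ne_last _), prod_const, card_univ, Fintype.card_fin]

end TensorTrain

theorem tt_moment_rademacher_sq_general
    {Ω : Type} [MeasurableSpace Ω] (μ : Measure Ω) [IsProbabilityMeasure μ]
    (N : ℕ) (d : Fin N → ℕ) (R : ℕ)
    (ρ : Fin (N + 1) → ℕ) (hρ0 : ρ 0 = 1) (hρlast : ρ (Fin.last N) = 1)
    (hρmid : ∀ n : Fin (N + 1), n ≠ 0 → n ≠ Fin.last N → ρ n = R)
    (X : ((n : Fin N) → Fin (d n)) → ℝ)
    (G : Ω → (n : Fin N) → Fin (ρ n.castSucc) → Fin (d n) → Fin (ρ n.succ) → ℝ)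
    (hGmeas : ∀ n a i b, Measurable (fun ω => G ω n a i b))
    (hGdist : ∀ n a i b, Measure.map (fun ω => G ω n a i b) μ = radDist)
    (hGindep : iIndepFun
      (fun p : (Σ n : Fin N, Fin (ρ n.castSucc) × Fin (d n) × Fin (ρ n.succ)) =>
        fun ω => G ω p.1 p.2.1 p.2.2.1 p.2.2.2) μ) :
    ∫ ω, (∑ i, X i * ∑ a, ∑ b, ttPath d ρ (G ω) i a b) ^ 2 ∂μ
      = (R : ℝ) ^ (N - 1) * ∑ i, (X i) ^ 2 := by
  set F := fun (p : Σ n : Fin N, Fin (ρ n.castSucc) × Fin (d n) × Fin (ρ n.succ)) ω =>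
    G ω p.1 p.2.1 p.2.2.1 p.2.2.2
  have hF (p) : Measurable (F p) := hGmeas _ _ _ _
  have hlaw (p) : μ.map (F p) = radDist := hGdist _ _ _ _
  set W := fun (q : ((n : Fin N) → Fin (d n)) × ((n : Fin (N + 1)) → Fin (ρ n))) ω =>
    ∏ p ∈ ttEdges d ρ q.1 q.2, F p ω
  have hsum (ω) : ∑ i, X i * ∑ a, ∑ b, ttPath d ρ (G ω) i a b = ∑ q, X q.1 * W q ω := by
    simp only [W, F, sum_sum_ttPath, prod_ttEdges, mul_sum, Fintype.sum_prod_type]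
  have horth (q q') : ∫ ω, W q ω * W q' ω ∂μ = if q = q' then 1 else 0 := by
    rw [integral_prod_mul_prod_of_iIndepFun hF hlaw hGindep]
    exact if_congr (ttEdges_injective hρ0).eq_iff rfl rfl
  have hint (q q') : Integrable (fun ω => W q ω * W q' ω) μ := by
    simpa only [W, prod_mul_prod_eq_prod_pow] using
      integrable_prod_pow_of_map_eq_radDist hF hlaw _
  simp_rw [hsum]
  rw [integral_sq_sum_mul_of_orthonormal W hint horth, Fintype.sum_prod_type, sum_comm]
  simp [card_ttPaths hρ0 hρlast hρmid, mul_sum]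

/-- Expected isometry (second moment) for a TT tensor with i.i.d. Rademacher core
entries: `𝔼⟨𝒯, 𝒳⟩² = R^(N-1) ‖𝒳‖_F²`. -/
theorem tt_moment_rademacher_sq
    {Ω : Type} [MeasurableSpace Ω] (μ : Measure Ω) [IsProbabilityMeasure μ]
    (N : ℕ) (hN : 1 ≤ N) (d : Fin N → ℕ) (hd : ∀ n, 0 < d n) (R : ℕ) (hR : 0 < R)
    (ρ : Fin (N + 1) → ℕ) (hρ0 : ρ 0 = 1) (hρlast : ρ (Fin.last N) = 1)
    (hρmid : ∀ n : Fin (N + 1), n ≠ 0 → n ≠ Fin.last N → ρ n = R)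
    (X : ((n : Fin N) → Fin (d n)) → ℝ)
    (G : Ω → (n : Fin N) → Fin (ρ n.castSucc) → Fin (d n) → Fin (ρ n.succ) → ℝ)
    (hGmeas : ∀ n a i b, Measurable (fun ω => G ω n a i b))
    (hGdist : ∀ n a i b, Measure.map (fun ω => G ω n a i b) μ = radDist)
    (hGindep : iIndepFun
      (fun p : (Σ n : Fin N, Fin (ρ n.castSucc) × Fin (d n) × Fin (ρ n.succ)) =>
        fun ω => G ω p.1 p.2.1 p.2.2.1 p.2.2.2) μ) :
    ∫ ω, (∑ i, X i * ∑ a, ∑ b, ttPath d ρ (G ω) i a b) ^ 2 ∂μ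
      = (R : ℝ) ^ (N - 1) * ∑ i, (X i) ^ 2 :=
  tt_moment_rademacher_sq_general μ N d R ρ hρ0 hρlast hρmid X G hGmeas hGdist hGindep

end
end

section
/- Let $\mathbf{A} \in \mathbb{R}^{d \times R}$ be a random matrix whose entries are i.i.d. Rademacher random variables, and let $\mathbf{B} \in \mathbb{R}^{p \times d}$ be a random matrix independent of $\mathbf{A}$ with $\mathbb{E}\|\mathbf{B}\|_F^4 < \infty$. Then $\mathbb{E}\,\|\mathbf{B}\mathbf{A}\|_F^4 \le R^2\, \mathbb{E}\big[\mathrm{tr}(\mathbf{B}^\mathsf{T}\mathbf{B})^2\big] + 2R\, \mathbb{E}\big[\mathrm{tr}\big((\mathbf{B}^\mathsf{T}\mathbf{B})^2\big)\big]$. -/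
/-!
Stack the entries of `A` into a Rademacher vector `x` indexed by `Fin d × Fin R`; then
`‖B A‖_F² = xᵀ M x` with `M = (Bᵀ B) ⊗ₖ 1`, which is independent of `x`. Expanding the square and
factoring each term by independence, the fourth moments of a Rademacher vector,
`𝔼[x_a x_b x_c x_e] = δ_ab δ_ce + δ_ac δ_be + δ_ae δ_bc - 2 δ_abce`, give
`𝔼[(xᵀ M x)²] = 𝔼[(tr M)²] + 𝔼[tr (M Mᵀ)] + 𝔼[tr (M M)] - 2 ∑_a 𝔼[M_aa²]`.
Finally `tr M = R tr (Bᵀ B)`, `tr (M Mᵀ) = tr (M M) = R tr ((Bᵀ B)²)`, and the last term is `≤ 0`.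
-/

open MeasureTheory ProbabilityTheory Matrix Finset

noncomputable section

open scoped Kronecker

lemma Matrix.sq_sum_sum_mul_mul {ι α : Type*} [Fintype ι] [CommSemiring α] (m : Matrix ι ι α)
    (x : ι → α) :
    (∑ a, ∑ b, m a b * x a * x b) ^ 2
      = ∑ a, ∑ b, ∑ c, ∑ e, m a b * m c e * (x a * x b * x c * x e) := by
  rw [sq, Finset.sum_mul_sum]
  refine Finset.sum_congr rfl fun a _ => ?_
  simp only [Finset.sum_mul_sum]
  rw [Finset.sum_comm]
  exact Finset.sum_congr rfl fun b _ => Finset.sum_congr rfl fun c _ =>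
    Finset.sum_congr rfl fun e _ => by ring

def rademacherFourthMoment {ι : Type*} [DecidableEq ι] (a b c e : ι) : ℝ :=
  (if a = b ∧ c = e then 1 else 0) + (if a = c ∧ b = e then 1 else 0)
    + (if a = e ∧ b = c then 1 else 0) - 2 * (if a = b ∧ a = c ∧ a = e then 1 else 0)

lemma sum_mul_rademacherFourthMoment {ι : Type*} [Fintype ι] [DecidableEq ι]
    (t : ι → ι → ι → ι → ℝ) :
    ∑ a, ∑ b, ∑ c, ∑ e, t a b c e * rademacherFourthMoment a b c e
      = ∑ a, ∑ c, t a a c c + ∑ a, ∑ b, t a b a b + ∑ a, ∑ b, t a b b a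
        - 2 * ∑ a, t a a a a := by
  simp [rademacherFourthMoment, mul_add, mul_sub, Finset.sum_add_distrib,
    Finset.sum_sub_distrib, ite_and, Finset.mul_sum, mul_comm]

lemma MeasureTheory.integral_sum_sum {Ω κ₁ κ₂ E : Type*} [MeasurableSpace Ω] {μ : Measure Ω}
    [NormedAddCommGroup E] [NormedSpace ℝ E] [Fintype κ₁] [Fintype κ₂] {f : κ₁ → κ₂ → Ω → E}
    (hf : ∀ i j, Integrable (f i j) μ) :
    ∫ ω, ∑ i, ∑ j, f i j ω ∂μ = ∑ i, ∑ j, ∫ ω, f i j ω ∂μ := by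
  rw [integral_finsetSum _ fun i _ => integrable_finsetSum _ fun j _ => hf i j]
  exact Finset.sum_congr rfl fun i _ => integral_finsetSum _ fun j _ => hf i j

namespace ProbabilityTheory

variable {Ω ι : Type*} [MeasurableSpace Ω] {μ : Measure Ω} {X : ι → Ω → ℝ}

lemma integrable_mul_mul_mul_of_sq_eq_one [IsFiniteMeasure μ] (hmeas : ∀ i, Measurable (X i))
    (hsq : ∀ i, ∀ᵐ ω ∂μ, X i ω ^ 2 = 1) (a b c e : ι) :
    Integrable (fun ω => X a ω * X b ω * X c ω * X e ω) μ := by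
  refine Integrable.of_bound (by fun_prop) 1 ?_
  filter_upwards [hsq a, hsq b, hsq c, hsq e] with ω ha hb hc he
  rw [Real.norm_eq_abs, ← sq_le_one_iff_abs_le_one, mul_pow, mul_pow, mul_pow, ha, hb, hc, he]
  norm_num

variable [IsProbabilityMeasure μ] [DecidableEq ι]

lemma integral_mul_eq_ite_of_iIndepFun (hmeas : ∀ i, Measurable (X i)) (hindep : iIndepFun X μ)
    (hmean : ∀ i, ∫ ω, X i ω ∂μ = 0) (hsq : ∀ i, ∀ᵐ ω ∂μ, X i ω ^ 2 = 1) (a b : ι) :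
    ∫ ω, X a ω * X b ω ∂μ = if a = b then 1 else 0 := by
  split_ifs with hab
  · subst hab
    rw [integral_congr_ae ((hsq a).mono fun ω h => (sq (X a ω)).symm.trans h)]
    simp
  · simpa [hmean] using (hindep.indepFun hab).integral_mul_eq_mul_integral
      (hmeas a).aestronglyMeasurable (hmeas b).aestronglyMeasurable

lemma integral_mul_mul_mul_eq_of_iIndepFun (hmeas : ∀ i, Measurable (X i))
    (hindep : iIndepFun X μ) (hmean : ∀ i, ∫ ω, X i ω ∂μ = 0)
    (hsq : ∀ i, ∀ᵐ ω ∂μ, X i ω ^ 2 = 1) (a b c e : ι) :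
    ∫ ω, X a ω * X b ω * X c ω * X e ω ∂μ = rademacherFourthMoment a b c e := by
  unfold rademacherFourthMoment
  have hpair := integral_mul_eq_ite_of_iIndepFun hmeas hindep hmean hsq
  by_cases hab : a = b
  · subst hab
    rw [integral_congr_ae ((hsq a).mono fun ω h => by
      show _ = X c ω * X e ω
      linear_combination X c ω * X e ω * h), hpair]
    by_cases hac : a = c <;> by_cases hae : a = e <;> simp_all; norm_num
  by_cases hac : a = c
  · subst hac
    rw [integral_congr_ae ((hsq a).mono fun ω h => by
      show _ = X b ω * X e ω
      linear_combination X b ω * X e ω * h), hpair]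
    by_cases hae : a = e <;> by_cases hbe : b = e <;> simp_all
  by_cases hae : a = e
  · subst hae
    rw [integral_congr_ae ((hsq a).mono fun ω h => by
      show _ = X b ω * X c ω
      linear_combination X b ω * X c ω * h), hpair]
    simp_all
  -- `b`, `c`, `e` may coincide among themselves, so `X a` is split off from the whole block.
  have hXa : IndepFun (X a) (fun ω => X b ω * X c ω * X e ω) μ :=
    (hindep.indepFun_finset {a} {b, c, e} (by simp [hab, hac, hae]) hmeas).comp
      (φ := fun v : ({a} : Finset ι) → ℝ => v ⟨a, by simp⟩)
      (ψ := fun w : ({b, c, e} : Finset ι) → ℝ =>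
        w ⟨b, by simp⟩ * w ⟨c, by simp⟩ * w ⟨e, by simp⟩)
      (by fun_prop) (by fun_prop)
  have h := hXa.integral_mul_eq_mul_integral (hmeas a).aestronglyMeasurable
    (by fun_prop : Measurable fun ω => X b ω * X c ω * X e ω).aestronglyMeasurable
  simp only [Pi.mul_apply, hmean, zero_mul, ← mul_assoc] at h
  simp [hab, hac, hae, h]

theorem integral_sq_quadForm_eq [Fintype ι] (hmeas : ∀ i, Measurable (X i))
    (hindep : iIndepFun X μ) (hmean : ∀ i, ∫ ω, X i ω ∂μ = 0)
    (hsq : ∀ i, ∀ᵐ ω ∂μ, X i ω ^ 2 = 1) {M : Ω → Matrix ι ι ℝ}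
    (hM : ∀ a b, MemLp (fun ω => M ω a b) 2 μ)
    (hMX : IndepFun (fun ω a b => M ω a b) (fun ω i => X i ω) μ) :
    ∫ ω, (∑ a, ∑ b, M ω a b * X a ω * X b ω) ^ 2 ∂μ =
      ∫ ω, trace (M ω) ^ 2 ∂μ + ∫ ω, trace (M ω * (M ω)ᵀ) ∂μ + ∫ ω, trace (M ω * M ω) ∂μ
        - 2 * ∫ ω, ∑ a, M ω a a ^ 2 ∂μ := by
  have hMM (a b c e : ι) : Integrable (fun ω => M ω a b * M ω c e) μ :=
    (hM a b).integrable_mul (hM c e)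
  have hXXXX := integrable_mul_mul_mul_of_sq_eq_one hmeas hsq
  have hMX' (a b c e : ι) : IndepFun (fun ω => M ω a b * M ω c e)
      (fun ω => X a ω * X b ω * X c ω * X e ω) μ :=
    hMX.comp (φ := fun m : ι → ι → ℝ => m a b * m c e)
      (ψ := fun x : ι → ℝ => x a * x b * x c * x e) (by fun_prop) (by fun_prop)
  have hterm (a b c e : ι) :
      ∫ ω, M ω a b * M ω c e * (X a ω * X b ω * X c ω * X e ω) ∂μ
        = (∫ ω, M ω a b * M ω c e ∂μ) * rademacherFourthMoment a b c e := by
    rw [← integral_mul_mul_mul_eq_of_iIndepFun hmeas hindep hmean hsq]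
    exact (hMX' a b c e).integral_mul_eq_mul_integral (hMM a b c e).1 (hXXXX a b c e).1
  have hint (a b c e : ι) :
      Integrable (fun ω => M ω a b * M ω c e * (X a ω * X b ω * X c ω * X e ω)) μ :=
    (hMX' a b c e).integrable_mul (hMM a b c e) (hXXXX a b c e)
  calc ∫ ω, (∑ a, ∑ b, M ω a b * X a ω * X b ω) ^ 2 ∂μ
      = ∑ a, ∑ b, ∑ c, ∑ e, ∫ ω, M ω a b * M ω c e * (X a ω * X b ω * X c ω * X e ω) ∂μ := by
        have hexp (ω : Ω) : (∑ a, ∑ b, M ω a b * X a ω * X b ω) ^ 2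
            = ∑ a, ∑ b, ∑ c, ∑ e, M ω a b * M ω c e * (X a ω * X b ω * X c ω * X e ω) :=
          Matrix.sq_sum_sum_mul_mul (M ω) (fun i => X i ω)
        simp only [hexp]
        rw [integral_sum_sum fun a b => integrable_finsetSum _ fun c _ =>
          integrable_finsetSum _ fun e _ => hint a b c e]
        simp only [integral_sum_sum (hint _ _)]
    _ = _ := by
        simp only [hterm, sum_mul_rademacherFourthMoment, Matrix.trace, Matrix.diag,
          Matrix.mul_apply, Matrix.transpose_apply, sq, Finset.sum_mul_sum]
        rw [integral_sum_sum fun a c => hMM a a c c, integral_sum_sum fun a b => hMM a b a b,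
          integral_sum_sum fun a b => hMM a b b a, integral_finsetSum _ fun a _ => hMM a a a a]

end ProbabilityTheory

namespace Matrix

variable {m n l α : Type*} [Fintype m] [Fintype n] [Fintype l] [DecidableEq l]

lemma sum_sq_mul_apply_eq_sum_kronecker_one [CommSemiring α] (b : Matrix m n α)
    (a : Matrix n l α) :
    ∑ i, ∑ j, (b * a) i j ^ 2
      = ∑ q, ∑ q', ((bᵀ * b) ⊗ₖ (1 : Matrix l l α)) q q' * a q.1 q.2 * a q'.1 q'.2 := by
  calc ∑ i, ∑ j, (b * a) i j ^ 2
      = ∑ j, ∑ i, (∑ k, b i k * a k j) * (∑ k', b i k' * a k' j) := by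
        rw [Finset.sum_comm]; simp only [mul_apply, sq]
    _ = ∑ j, ∑ k, ∑ k', (bᵀ * b) k k' * a k j * a k' j := by
        refine Finset.sum_congr rfl fun j _ => ?_
        simp only [mul_apply, transpose_apply, Finset.sum_mul, Finset.mul_sum]
        rw [Finset.sum_comm]
        refine Finset.sum_congr rfl fun k _ => ?_
        rw [Finset.sum_comm]
        exact Finset.sum_congr rfl fun k' _ => Finset.sum_congr rfl fun i _ => by ring
    _ = _ := by
        rw [Finset.sum_comm]
        simp [Fintype.sum_prod_type, one_apply]

lemma abs_transpose_mul_self_apply_le (b : Matrix m n ℝ) (k k' : n) :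
    |(bᵀ * b) k k'| ≤ ∑ i, ∑ j, b i j ^ 2 := by
  rw [mul_apply]
  refine (abs_sum_le_sum_abs _ _).trans (Finset.sum_le_sum fun i _ => ?_)
  have hk := Finset.single_le_sum (fun j _ => sq_nonneg (b i j)) (Finset.mem_univ k)
  have hk' := Finset.single_le_sum (fun j _ => sq_nonneg (b i j)) (Finset.mem_univ k')
  rw [transpose_apply, abs_mul]
  nlinarith [two_mul_le_add_sq |b i k| |b i k'|, sq_abs (b i k), sq_abs (b i k')]

lemma trace_kronecker_one [CommSemiring α] (G : Matrix n n α) :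
    trace (G ⊗ₖ (1 : Matrix l l α)) = Fintype.card l * trace G := by
  rw [trace_kronecker, trace_one, mul_comm]

lemma trace_kronecker_one_mul_self [CommSemiring α] [DecidableEq n] (G : Matrix n n α) :
    trace ((G ⊗ₖ (1 : Matrix l l α)) * (G ⊗ₖ (1 : Matrix l l α)))
      = Fintype.card l * trace (G ^ 2) := by
  rw [← mul_kronecker_mul, one_mul, trace_kronecker_one, sq]

end Matrix

section GramKronecker

variable {Ω m n l : Type*} [MeasurableSpace Ω] {μ : Measure Ω} [Fintype m] [DecidableEq l]

lemma measurable_transpose_mul_self_kronecker_one :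
    Measurable fun (b : m → n → ℝ) (q q' : n × l) =>
      (((of b)ᵀ * of b) ⊗ₖ (1 : Matrix l l ℝ)) q q' := by
  refine measurable_pi_lambda _ fun q => measurable_pi_lambda _ fun q' => ?_
  simp only [kroneckerMap_apply, mul_apply, transpose_apply, of_apply]
  fun_prop

lemma memLp_transpose_mul_self_kronecker_one_apply [Fintype n] {B : Ω → m → n → ℝ}
    (hB : Measurable B) (hBint : Integrable (fun ω => (∑ i, ∑ j, B ω i j ^ 2) ^ 2) μ)
    (q q' : n × l) :
    MemLp (fun ω => (((of (B ω))ᵀ * of (B ω)) ⊗ₖ (1 : Matrix l l ℝ)) q q') 2 μ := by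
  have hS : MemLp (fun ω => ∑ i, ∑ j, B ω i j ^ 2) 2 μ :=
    (memLp_two_iff_integrable_sq (by fun_prop)).2 hBint
  have hmeas : Measurable fun ω => (((of (B ω))ᵀ * of (B ω)) ⊗ₖ (1 : Matrix l l ℝ)) q q' :=
    ((measurable_transpose_mul_self_kronecker_one.comp hB).eval (a := q)).eval (a := q')
  refine hS.of_le hmeas.aestronglyMeasurable (ae_of_all _ fun ω => ?_)
  rw [Real.norm_eq_abs, Real.norm_of_nonneg (by positivity), kroneckerMap_apply, abs_mul]
  calc |((of (B ω))ᵀ * of (B ω)) q.1 q'.1| * |(1 : Matrix l l ℝ) q.2 q'.2|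
      ≤ |((of (B ω))ᵀ * of (B ω)) q.1 q'.1| := by
        rw [one_apply]; split_ifs <;> simp
    _ ≤ ∑ i, ∑ j, B ω i j ^ 2 := abs_transpose_mul_self_apply_le (of (B ω)) _ _

end GramKronecker

lemma ae_sq_eq_one_radDist : ∀ᵐ x ∂radDist, x ^ 2 = 1 := by
  have hm : MeasurableSet {x : ℝ | x ^ 2 = 1} :=
    measurableSet_eq_fun (by fun_prop) measurable_const
  simp only [radDist, ae_add_measure_iff]
  constructor <;> exact Measure.ae_smul_measure ((ae_dirac_iff hm).2 (by norm_num)) _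

lemma integral_id_radDist : ∫ x, x ∂radDist = 0 := by
  rw [radDist, integral_add_measure, integral_smul_measure, integral_smul_measure,
    integral_dirac, integral_dirac]
  · norm_num
  all_goals exact (integrable_dirac (by simp)).smul_measure (by simp)

section RadDist

variable {Ω : Type*} [MeasurableSpace Ω] {μ : Measure Ω} {Y : Ω → ℝ}

lemma integral_eq_zero_of_map_eq_radDist (hY : Measurable Y) (h : μ.map Y = radDist) :
    ∫ ω, Y ω ∂μ = 0 := by
  rw [← integral_id_radDist, ← h, integral_map hY.aemeasurable (by fun_prop)]

lemma ae_sq_eq_one_of_map_eq_radDist (hY : Measurable Y) (h : μ.map Y = radDist) :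
    ∀ᵐ ω ∂μ, Y ω ^ 2 = 1 :=
  ae_of_ae_map hY.aemeasurable (h ▸ ae_sq_eq_one_radDist)

end RadDist

/-- For a random `d × R` matrix `A` with i.i.d. Rademacher entries and an independent
random `p × d` matrix `B` with `𝔼‖B‖_F⁴ < ∞`:
`𝔼‖B A‖_F⁴ ≤ R² 𝔼[tr(Bᵀ B)²] + 2R 𝔼[tr((Bᵀ B)²)]`. -/
theorem rademacher_matrix_prod_fourth_moment_trace_le
    {Ω : Type} [MeasurableSpace Ω] (μ : Measure Ω) [IsProbabilityMeasure μ]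
    (d R p : ℕ)
    (A : Ω → Fin d → Fin R → ℝ) (B : Ω → Fin p → Fin d → ℝ)
    (hAmeas : ∀ i j, Measurable (fun ω => A ω i j))
    (hAdist : ∀ i j, Measure.map (fun ω => A ω i j) μ = radDist)
    (hAiid : iIndepFun
      (fun q : Fin d × Fin R => fun ω => A ω q.1 q.2) μ)
    (hBmeas : Measurable B)
    (hAB : IndepFun A B μ)
    (hBint : Integrable (fun ω => (∑ i, ∑ j, (B ω i j) ^ 2) ^ 2) μ) :
    ∫ ω, (∑ i, ∑ j, ((Matrix.of (B ω) * Matrix.of (A ω)) i j) ^ 2) ^ 2 ∂μ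
      ≤ (R : ℝ) ^ 2 * (∫ ω, (Matrix.trace ((Matrix.of (B ω))ᵀ * Matrix.of (B ω))) ^ 2 ∂μ)
        + 2 * R * (∫ ω, Matrix.trace (((Matrix.of (B ω))ᵀ * Matrix.of (B ω)) ^ 2) ∂μ) := by
  have hMX : IndepFun (fun ω (q q' : Fin d × Fin R) =>
        (((of (B ω))ᵀ * of (B ω)) ⊗ₖ (1 : Matrix (Fin R) (Fin R) ℝ)) q q')
      (fun ω (q : Fin d × Fin R) => A ω q.1 q.2) μ :=
    hAB.symm.comp measurable_transpose_mul_self_kronecker_one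
      (ψ := fun (a : Fin d → Fin R → ℝ) (q : Fin d × Fin R) => a q.1 q.2) (by fun_prop)
  have hquad := integral_sq_quadForm_eq (fun q => hAmeas q.1 q.2) hAiid
    (fun q => integral_eq_zero_of_map_eq_radDist (hAmeas q.1 q.2) (hAdist q.1 q.2))
    (fun q => ae_sq_eq_one_of_map_eq_radDist (hAmeas q.1 q.2) (hAdist q.1 q.2))
    (memLp_transpose_mul_self_kronecker_one_apply hBmeas hBint) hMX
  have hsymm (ω : Ω) : (((of (B ω))ᵀ * of (B ω)) ⊗ₖ (1 : Matrix (Fin R) (Fin R) ℝ))ᵀ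
      = ((of (B ω))ᵀ * of (B ω)) ⊗ₖ 1 := by
    rw [← kroneckerMap_transpose, transpose_one, transpose_mul, transpose_transpose]
  have hdiag : 0 ≤ ∫ ω, ∑ q,
      (((of (B ω))ᵀ * of (B ω)) ⊗ₖ (1 : Matrix (Fin R) (Fin R) ℝ)) q q ^ 2 ∂μ :=
    integral_nonneg fun ω => Finset.sum_nonneg fun q _ => sq_nonneg _
  calc _ = _ := by simp only [sum_sq_mul_apply_eq_sum_kronecker_one]; exact hquad
    _ ≤ _ := by
      simp only [hsymm, trace_kronecker_one, trace_kronecker_one_mul_self, Fintype.card_fin,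
        mul_pow, integral_const_mul]
      linarith
end
end
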